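/- The Dirac current map is surjective onto V: the set of vectors {κ(s,t) : s,t ∈ S} spans V. (Equivalently, the supertranslation algebra m = V ⊕ S, with bracket on S given by the Dirac current, is a fundamental graded Lie superalgebra: it is generated by its degree −1 part S.) -/

import Mathlib

/-! If `v` is `η`-orthogonal to every current `κ(s,t)`, then `ω(ρ(ι v) s, t) = 0` for all
`s, t`, so `ρ(ι v) = 0`. Since `ρ(ι v) ρ(ι w) + ρ(ι w) ρ(ι v)` is the scalar `-2 η(v,w)` and `S ≠ 0`,
`v` is then orthogonal to all of `V`, hence zero. So the currents have trivial orthogonal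
complement, and by nondegeneracy of `η` they span `V`. -/

noncomputable section

variable (V : Type) [AddCommGroup V] [Module ℝ V]

/-- The quadratic form `v ↦ -η(v,v)`; its Clifford algebra satisfies
`ι v * ι v = -η(v,v) • 1`. -/
def Qf (η : LinearMap.BilinForm ℝ V) : QuadraticForm ℝ V := (-η).toQuadraticMap

/-- `A` belongs to `so(V)`: it is skew-adjoint with respect to `η`. -/
def IsSkew (η : LinearMap.BilinForm ℝ V) (A : Module.End ℝ V) : Prop :=
  ∀ v w : V, η (A v) w + η v (A w) = 0

/-- `e` is an `η`-orthonormal basis exhibiting the 'mostly minus' Lorentzian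
signature `(1,10)` in dimension 11. -/
def IsLorentzianBasis (η : LinearMap.BilinForm ℝ V) (e : Module.Basis (Fin 11) ℝ V) : Prop :=
  ∀ i j, η (e i) (e j) = if i = j then (if (i : ℕ) = 0 then 1 else -1) else 0

open CliffordAlgebra LinearMap.BilinForm

section Lorentzian

variable {V : Type} [AddCommGroup V] [Module ℝ V] {η : LinearMap.BilinForm ℝ V}
  {e : Module.Basis (Fin 11) ℝ V}

theorem IsLorentzianBasis.isSymm (he : IsLorentzianBasis V η e) : η.IsSymm := by
  refine (isSymm_iff_basis e).2 fun i j => ?_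
  rw [he i j, he j i]
  split_ifs <;> simp_all

theorem IsLorentzianBasis.nondegenerate (he : IsLorentzianBasis V η e) : η.Nondegenerate := by
  refine (iIsOrtho.nondegenerate_iff_not_isOrtho_basis_self η e
    fun i j hij => (he i j).trans (if_neg hij)).2 fun i => ?_
  rw [he i i, if_pos rfl]
  split_ifs <;> norm_num

end Lorentzian

theorem CliffordAlgebra.polar_eq_zero_of_map_ι_eq_zero {R M A : Type*} [CommRing R]
    [AddCommGroup M] [Module R M] [Ring A] [Algebra R A] {Q : QuadraticForm R M}
    (hA : Function.Injective (algebraMap R A)) (f : CliffordAlgebra Q →ₐ[R] A) {v : M}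
    (hv : f (ι Q v) = 0) (w : M) : QuadraticMap.polar Q v w = 0 := by
  apply hA
  rw [map_zero, ← AlgHom.commutes f, ← ι_mul_ι_add_swap, map_add, map_mul, map_mul, hv,
    zero_mul, mul_zero, add_zero]

section CliffordModule

variable {V S : Type} [AddCommGroup V] [Module ℝ V] [AddCommGroup S] [Module ℝ S]
  {η : LinearMap.BilinForm ℝ V}

theorem polar_Qf (v w : V) : QuadraticMap.polar (Qf V η) v w = -(η v w + η w v) := by
  rw [Qf, LinearMap.BilinMap.polar_toQuadraticMap]
  simp only [LinearMap.neg_apply]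
  ring

theorem eq_zero_of_map_ι_eq_zero [Nontrivial S] (hsymm : η.IsSymm) (hnd : η.Nondegenerate)
    (ρ : CliffordAlgebra (Qf V η) →ₐ[ℝ] Module.End ℝ S) {v : V}
    (hv : ρ (ι (Qf V η) v) = 0) : v = 0 := by
  refine hnd.1 v fun w => ?_
  have := polar_eq_zero_of_map_ι_eq_zero (algebraMap ℝ (Module.End ℝ S)).injective ρ hv w
  rw [polar_Qf, ← hsymm.eq v w] at this
  linarith

theorem map_ι_eq_zero_of_forall_apply_κ_eq_zero {Q : QuadraticForm ℝ V}
    {ρ : CliffordAlgebra Q →ₐ[ℝ] Module.End ℝ S} {ω : LinearMap.BilinForm ℝ S}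
    (hω : ω.SeparatingLeft) {κ : S →ₗ[ℝ] S →ₗ[ℝ] V}
    (hκ : ∀ (v : V) (s t : S), η v (κ s t) = ω (ρ (ι Q v) s) t) {v : V}
    (hv : ∀ s t, η v (κ s t) = 0) : ρ (ι Q v) = 0 := by
  ext s
  exact hω _ fun t => hκ v s t ▸ hv s t

end CliffordModule

theorem stmt_16
    (η : LinearMap.BilinForm ℝ V) (e : Module.Basis (Fin 11) ℝ V) (he : IsLorentzianBasis V η e)
    (S : Type) [AddCommGroup S] [Module ℝ S] (hdimS : Module.finrank ℝ S = 32)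
    (ρ : CliffordAlgebra (Qf V η) →ₐ[ℝ] Module.End ℝ S)
    (ω : LinearMap.BilinForm ℝ S)
    (hω_nd : ω.Nondegenerate)
    (κ : S →ₗ[ℝ] S →ₗ[ℝ] V)
    (hκ : ∀ (v : V) (s t : S), η v (κ s t) = ω (ρ (CliffordAlgebra.ι (Qf V η) v) s) t)
    :
    Submodule.span ℝ {v : V | ∃ s t : S, v = κ s t} = ⊤ := by
  have : FiniteDimensional ℝ V := e.finiteDimensional_of_finite
  have : Nontrivial S := Module.nontrivial_of_finrank_eq_succ hdimS
  have hsymm := he.isSymm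
  have hnd := he.nondegenerate
  have hperp : η.orthogonal (Submodule.span ℝ {v : V | ∃ s t : S, v = κ s t}) = ⊥ := by
    refine (Submodule.eq_bot_iff _).2 fun v hv => eq_zero_of_map_ι_eq_zero hsymm hnd ρ ?_
    refine map_ι_eq_zero_of_forall_apply_κ_eq_zero hω_nd.1 hκ fun s t => ?_
    rw [hsymm.eq]
    exact hv _ (Submodule.subset_span ⟨s, t, rfl⟩)
  rw [← orthogonal_orthogonal hnd hsymm.isRefl (Submodule.span ℝ _), hperp, orthogonal_bot]
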